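/- Fix k ∈ {1,…,c}, U ∈ {−1,+1}^{n×c}, S ∈ {0,1}^{n×n}, and the columns of V other than column k, and view L as a function of the column v = V_{*k}. Let v₀ ∈ {−1,+1}^n be the current column, let b = h(v₀) + (nλ²/(4c²))·v₀ where h(v₀)_j = (λ/c)·Σ_{i=1}^n (S_{ij} − A_{ij}(v₀))·U_{ik}, and let v' ∈ {−1,+1}^n be any vector satisfying v'_j·b_j = |b_j| for all j (i.e., v' agrees with sign(b) wherever b_j ≠ 0, as in update rule (4)). Then L(v') ≥ L(v₀): the DLFH column update for V never decreases the objective. -/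

import Mathlib

/-!
Since `(log (1 + exp))'' = σ (1 - σ) ≤ 1/4`, the function `log (1 + exp)` lies below its tangent
parabola of curvature `1/4` at every point, so each summand `S θ - log (1 + exp θ)` of `L` lies
above a concave quadratic minorant touching it at `Θ(v₀)`. Changing `v_j` moves only the
`j`-th column of `Θ`, by `(λ/c) U_{ik} (v_j - v₀_j)`, so the minorant of `L(v) - L(v₀)` splits
into one quadratic per coordinate. On `{-1, 1}`, where `v_j² = 1`, that quadratic is the linear
function `b_j (v_j - v₀_j)`, which the sign update makes nonnegative.
-/

open scoped BigOperators

noncomputable def logistic (t : ℝ) : ℝ := 1 / (1 + Real.exp (-t))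

open Real

lemma logistic_eq_sigmoid : logistic = sigmoid := by
  funext t
  rw [logistic, sigmoid_def, one_div]

lemma sigmoid_mul_one_sub_le (x : ℝ) : sigmoid x * (1 - sigmoid x) ≤ 1 / 4 := by
  nlinarith [sq_nonneg (sigmoid x - 1 / 2)]

lemma hasDerivAt_log_one_add_exp (x : ℝ) :
    HasDerivAt (fun t => log (1 + exp t)) (sigmoid x) x := by
  convert ((hasDerivAt_exp x).const_add 1).log (by positivity) using 1
  rw [sigmoid_def, exp_neg]
  field_simp
  ring

lemma monotone_div_four_sub_sigmoid : Monotone fun t => t / 4 - sigmoid t := by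
  have hd : ∀ x, HasDerivAt (fun t => t / 4 - sigmoid t)
      (1 / 4 - sigmoid x * (1 - sigmoid x)) x := fun x =>
    ((hasDerivAt_id x).div_const 4).sub (hasDerivAt_sigmoid x)
  refine monotone_of_deriv_nonneg (fun x => (hd x).differentiableAt) fun x => ?_
  rw [(hd x).deriv, sub_nonneg]
  exact sigmoid_mul_one_sub_le x

lemma add_mul_sub_le_of_hasDerivAt_of_monotone {g g' : ℝ → ℝ}
    (hg : ∀ x, HasDerivAt g (g' x) x) (hg' : Monotone g') (a t : ℝ) :
    g a + g' a * (t - a) ≤ g t := by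
  have hdiff : Differentiable ℝ g := fun x => (hg x).differentiableAt
  have hderiv : deriv g = g' := funext fun x => (hg x).deriv
  rcases le_total a t with hat | hta
  · have := (convex_Ici a).mul_sub_le_image_sub_of_le_deriv hdiff.continuous.continuousOn
      hdiff.differentiableOn (C := g' a) (fun x hx => by
        rw [interior_Ici] at hx
        exact hderiv ▸ hg' hx.le) a Set.self_mem_Ici t hat hat
    linarith
  · have := (convex_Iic a).image_sub_le_mul_sub_of_deriv_le hdiff.continuous.continuousOn
      hdiff.differentiableOn (C := g' a) (fun x hx => by
        rw [interior_Iic] at hx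
        exact hderiv ▸ hg' hx.le) t hta a Set.self_mem_Iic hta
    linarith

lemma log_one_add_exp_le (a t : ℝ) :
    log (1 + exp t) ≤ log (1 + exp a) + sigmoid a * (t - a) + (t - a) ^ 2 / 8 := by
  have hg : ∀ x, HasDerivAt (fun s => s ^ 2 / 8 - log (1 + exp s)) (x / 4 - sigmoid x) x :=
    fun x => (((hasDerivAt_pow 2 x).div_const 8).sub (hasDerivAt_log_one_add_exp x)).congr_deriv
      (by norm_num; ring)
  have := add_mul_sub_le_of_hasDerivAt_of_monotone hg monotone_div_four_sub_sigmoid a t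
  linear_combination this

noncomputable def logLik (y θ : ℝ) : ℝ := y * θ - log (1 + exp θ)

lemma logLik_add_mul_sub_sub_sq_le (y a t : ℝ) :
    logLik y a + (y - sigmoid a) * (t - a) - (t - a) ^ 2 / 8 ≤ logLik y t := by
  have := log_one_add_exp_le a t
  unfold logLik
  linarith

lemma sum_logLik_add_mul_sub_sub_sq_le {ι : Type*} (s : Finset ι) (y a w : ι → ℝ) (d : ℝ) :
    ∑ i ∈ s, logLik (y i) (a i) + d * ∑ i ∈ s, (y i - sigmoid (a i)) * w i
      - d ^ 2 / 8 * ∑ i ∈ s, w i ^ 2 ≤ ∑ i ∈ s, logLik (y i) (a i + w i * d) := by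
  calc _ = ∑ i ∈ s, (logLik (y i) (a i) + (y i - sigmoid (a i)) * (a i + w i * d - a i)
          - (a i + w i * d - a i) ^ 2 / 8) := by
        simp only [add_sub_cancel_left, Finset.sum_sub_distrib, Finset.sum_add_distrib,
          Finset.mul_sum]
        ring_nf
    _ ≤ _ := Finset.sum_le_sum fun i _ => logLik_add_mul_sub_sub_sq_le _ _ _

lemma mul_sub_sub_mul_sq_nonneg {x y h ρ b : ℝ} (hx : x = 1 ∨ x = -1) (hy : y = 1 ∨ y = -1)
    (hb : b = h + 2 * ρ * x) (hyb : y * b = |b|) :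
    0 ≤ h * (y - x) - ρ * (y - x) ^ 2 := by
  subst hb
  rcases hx with rfl | rfl <;> rcases hy with rfl | rfl <;>
    nlinarith [abs_nonneg (h + 2 * ρ * 1), abs_nonneg (h + 2 * ρ * -1)]

theorem dlfh_update_V_ascent_general (n c : ℕ)
    (lam : ℝ) (k : Fin c)
    (U V : Fin n → Fin c → ℝ)
    (hU : ∀ i k', U i k' = 1 ∨ U i k' = -1)
    (S : Fin n → Fin n → ℝ)
    (Θ : (Fin n → ℝ) → Fin n → Fin n → ℝ)
    (hΘ : ∀ v i j, Θ v i j =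
      (lam / c) * (U i k * v j + ∑ k' ∈ Finset.univ.erase k, U i k' * V j k'))
    (L : (Fin n → ℝ) → ℝ)
    (hL : ∀ v, L v = ∑ i : Fin n, ∑ j : Fin n,
      (S i j * Θ v i j - Real.log (1 + Real.exp (Θ v i j))))
    (v₀ : Fin n → ℝ) (hv₀ : ∀ j, v₀ j = 1 ∨ v₀ j = -1)
    (b : Fin n → ℝ)
    (hb : ∀ j, b j = (lam / c) * (∑ i : Fin n, (S i j - logistic (Θ v₀ i j)) * U i k)
      + (n * lam ^ 2 / (4 * c ^ 2)) * v₀ j)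
    (v' : Fin n → ℝ) (hv' : ∀ j, v' j = 1 ∨ v' j = -1)
    (hmax : ∀ j, v' j * b j = |b j|) :
    L v₀ ≤ L v' := by
  have hcols : ∀ v, L v = ∑ j, ∑ i, logLik (S i j) (Θ v i j) := fun v =>
    (hL v).trans Finset.sum_comm
  have hw : ∑ i : Fin n, (lam / c * U i k) ^ 2 = n * (lam / c) ^ 2 := by
    have hU2 : ∀ i, U i k ^ 2 = 1 := fun i => by rcases hU i k with h | h <;> simp [h]
    simp [mul_pow, hU2]
  rw [hcols, hcols]
  refine Finset.sum_le_sum fun j _ => ?_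
  set d := v' j - v₀ j
  set h := lam / c * ∑ i, (S i j - sigmoid (Θ v₀ i j)) * U i k
  have hΘ' : ∀ i, Θ v' i j = Θ v₀ i j + lam / c * U i k * d := fun i => by
    rw [hΘ, hΘ]; ring
  have hstep : 0 ≤ h * d - n * lam ^ 2 / (8 * c ^ 2) * d ^ 2 :=
    mul_sub_sub_mul_sq_nonneg (hv₀ j) (hv' j) (by rw [hb j, logistic_eq_sigmoid]; ring) (hmax j)
  have hlin : d * ∑ i, (S i j - sigmoid (Θ v₀ i j)) * (lam / c * U i k) = h * d := by
    simp only [h, Finset.mul_sum, Finset.sum_mul]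
    exact Finset.sum_congr rfl fun i _ => by ring
  calc ∑ i, logLik (S i j) (Θ v₀ i j)
      ≤ ∑ i, logLik (S i j) (Θ v₀ i j)
          + d * ∑ i, (S i j - sigmoid (Θ v₀ i j)) * (lam / c * U i k)
          - d ^ 2 / 8 * ∑ i, (lam / c * U i k) ^ 2 := by
        rw [hlin, hw]
        linear_combination hstep
    _ ≤ ∑ i, logLik (S i j) (Θ v₀ i j + lam / c * U i k * d) :=
        sum_logLik_add_mul_sub_sub_sq_le _ _ _ _ _
    _ = ∑ i, logLik (S i j) (Θ v' i j) := by simp only [hΘ']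

/-- The DLFH column update (4) for `V` never decreases the objective: if `v₀` is the
current column of `V`, `b = h(v₀) + (nλ²/(4c²))·v₀`, and `v' ∈ {−1,+1}^n` satisfies
`v'_j·b_j = |b_j|` for all `j`, then `L(v') ≥ L(v₀)`. -/
theorem dlfh_update_V_ascent (n c : ℕ) (hn : 1 ≤ n) (hc : 1 ≤ c)
    (lam : ℝ) (hlam : 0 < lam) (k : Fin c)
    (U V : Fin n → Fin c → ℝ)
    (hU : ∀ i k', U i k' = 1 ∨ U i k' = -1)
    (hV : ∀ j k', V j k' = 1 ∨ V j k' = -1)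
    (S : Fin n → Fin n → ℝ)
    (hS : ∀ i j, S i j = 0 ∨ S i j = 1)
    (Θ : (Fin n → ℝ) → Fin n → Fin n → ℝ)
    (hΘ : ∀ v i j, Θ v i j =
      (lam / c) * (U i k * v j + ∑ k' ∈ Finset.univ.erase k, U i k' * V j k'))
    (L : (Fin n → ℝ) → ℝ)
    (hL : ∀ v, L v = ∑ i : Fin n, ∑ j : Fin n,
      (S i j * Θ v i j - Real.log (1 + Real.exp (Θ v i j))))
    (v₀ : Fin n → ℝ) (hv₀ : ∀ j, v₀ j = 1 ∨ v₀ j = -1)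
    (b : Fin n → ℝ)
    (hb : ∀ j, b j = (lam / c) * (∑ i : Fin n, (S i j - logistic (Θ v₀ i j)) * U i k)
      + (n * lam ^ 2 / (4 * c ^ 2)) * v₀ j)
    (v' : Fin n → ℝ) (hv' : ∀ j, v' j = 1 ∨ v' j = -1)
    (hmax : ∀ j, v' j * b j = |b j|) :
    L v₀ ≤ L v' :=
  dlfh_update_V_ascent_general n c lam k U V hU S Θ hΘ L hL v₀ hv₀ b hb v' hv' hmax
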